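/- (Theorem 4) Assume $(\varrho_n)_{n \in \mathbb{Z}}$ is summable. Let $q_1 \le q$ be natural numbers, let $t_1,\dots,t_q \in \mathbb{R}$ and $C_1,\dots,C_q \ge 0$, and define $v : G_k \to \mathbb{R}$ by $v(x) = \sum_{\ell=1}^{q_1} t_\ell C_\ell \, \Sigma^-(\phi(x)) + \sum_{\ell=q_1+1}^{q} t_\ell C_\ell \, \Sigma^+(\phi(x))$ (a linear combination of the $p$-harmonic functions from the families $U_1$ and $U_2$). Then $v$ is $H_{ij}$-periodic and $p$-harmonic: $\Delta_p v(x) = 0$ for all $x \in G_k$. In other words, any tuple of functions from $U_1 \cup U_2$ has a linear relation. -/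

import Mathlib

open scoped BigOperators

noncomputable section

/-- The group representation `G_k` of the Cayley tree of order `k`:
the free product of `k+1` copies of the cyclic group of order two. -/
abbrev G (k : ℕ) : Type := Monoid.CoprodI (fun _ : Fin (k + 1) => Multiplicative (ZMod 2))

/-- The generators `a_0, ..., a_k` of `G_k`. -/
def gen (k : ℕ) (s : Fin (k + 1)) : G k :=
  Monoid.CoprodI.of (i := s) (Multiplicative.ofAdd (1 : ZMod 2))

/-- `φ_p(t) = |t|^(p-2) t` (real powers). -/
noncomputable def phiP (p t : ℝ) : ℝ := |t| ^ (p - 2) * t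

/-- The discrete `p`-Laplacian on the Cayley tree with resistances `r`:
`Δ_p u (x) = ∑_{s=0}^{k} φ_p ((u (x a_s) - u x) / r (x, x a_s))`. -/
noncomputable def pLap (k : ℕ) (p : ℝ) (r : G k × G k → ℝ) (u : G k → ℝ) (x : G k) : ℝ :=
  ∑ s : Fin (k + 1), phiP p ((u (x * gen k s) - u x) / r (x, x * gen k s))

/-- A function `u : G_k → ℝ` is `H`-periodic if `u (y x) = u x` for all `y ∈ H`, `x ∈ G_k`. -/
def IsPeriodic (k : ℕ) (H : Subgroup (G k)) (u : G k → ℝ) : Prop :=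
  ∀ y ∈ H, ∀ x : G k, u (y * x) = u x

/-- The coset index `φ(x) = ρ(x)(0)` associated to a permutation action `ρ` of `G_k` on `ℤ`. -/
def cosetIdx {k : ℕ} (ρ : G k →* Equiv.Perm ℤ) (x : G k) : ℤ := ρ x 0

/-!
Write `v = g ∘ φ` with `g n = ∑_ℓ t_ℓ C_ℓ Σ^∓(n)`. Each `Σ^-` gains `ϱ_n` and each `Σ^+` loses it
when `n` steps to `n + 1`, so `g (n + 1) - g n = D ϱ_n` for one constant `D`.

Every `ρ(x)` is an isometry of `ℤ`, being a product of the reflections `ρ(a_s)`, and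
`φ(x a_i) = ρ(x)(1)`, `φ(x a_j) = ρ(x)(-1)`, `φ(x a_s) = φ(x)` for the other `s`. So `x` has one
neighbour on level `φ(x) + 1`, across resistance `ϱ_{φ(x)}`, one on level `φ(x) - 1`, across
`ϱ_{φ(x) - 1}`, and all others on its own level: `Δ_p v(x) = φ_p(D) + φ_p(-D) = 0`.

Periodicity: `ρ ∘ f = ρ` holds on the generators, so `ker f ≤ ker ρ` and `φ` is constant on the
cosets `H_{ij} x`.
-/

section TsumInt

variable {α : Type*} [AddCommGroup α] [UniformSpace α] [IsUniformAddGroup α] [CompleteSpace α]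
  [T2Space α] {f : ℤ → α}

theorem Summable.tsum_lt_add_one (hf : Summable f) (n : ℤ) :
    ∑' m : {m : ℤ // m < n + 1}, f m = ∑' m : {m : ℤ // m < n}, f m + f n := by
  have hunion : {m : ℤ | m < n + 1} = {m : ℤ | m < n} ∪ {n} := by
    ext m; simp only [Set.mem_ofPred_eq, Set.mem_union, Set.mem_singleton_iff]; omega
  rw [← tsum_singleton n f]
  exact (tsum_congr_set_coe f hunion).trans
    ((hf.subtype _).tsum_union_disjoint (by simp) (hf.subtype _))

theorem Summable.tsum_le_eq_add (hf : Summable f) (n : ℤ) :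
    ∑' m : {m : ℤ // n ≤ m}, f m = f n + ∑' m : {m : ℤ // n + 1 ≤ m}, f m := by
  have hunion : {m : ℤ | n ≤ m} = {n} ∪ {m : ℤ | n + 1 ≤ m} := by
    ext m; simp only [Set.mem_ofPred_eq, Set.mem_union, Set.mem_singleton_iff]; omega
  rw [← tsum_singleton n f]
  exact (tsum_congr_set_coe f hunion).trans
    ((hf.subtype _).tsum_union_disjoint (by simp) (hf.subtype _))

end TsumInt

theorem sum_ite_tsum_add_one_sub {ϱ : ℤ → ℝ} (hϱ : Summable ϱ) {q : ℕ} (q₁ : ℕ) (c : Fin q → ℝ)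
    (n : ℤ) :
    (∑ l : Fin q, if (l : ℕ) < q₁ then c l * ∑' m : {m : ℤ // m < n + 1}, ϱ m
      else c l * ∑' m : {m : ℤ // n + 1 ≤ m}, ϱ m) -
    (∑ l : Fin q, if (l : ℕ) < q₁ then c l * ∑' m : {m : ℤ // m < n}, ϱ m
      else c l * ∑' m : {m : ℤ // n ≤ m}, ϱ m) =
    (∑ l : Fin q, if (l : ℕ) < q₁ then c l else -c l) * ϱ n := by
  rw [← Finset.sum_sub_distrib, Finset.sum_mul]
  refine Finset.sum_congr rfl fun l _ => ?_
  split_ifs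
  · rw [hϱ.tsum_lt_add_one]; ring
  · rw [hϱ.tsum_le_eq_add n]; ring

theorem phiP_zero (p : ℝ) : phiP p 0 = 0 := by simp [phiP]

theorem phiP_neg (p t : ℝ) : phiP p (-t) = -phiP p t := by simp [phiP]

theorem pLap_comp_eq_zero {k : ℕ} {p : ℝ} {r : G k × G k → ℝ}
    (hr_symm : ∀ x y : G k, r (x, y) = r (y, x)) {ψ : G k → ℤ} {ϱ : ℤ → ℝ} (hϱ : ∀ n, ϱ n ≠ 0)
    (hr : ∀ x y : G k, ψ y = ψ x + 1 → r (x, y) = ϱ (ψ x)) {g : ℤ → ℝ} {D : ℝ}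
    (hg : ∀ n, g (n + 1) - g n = D * ϱ n) {x : G k} {sp sm : Fin (k + 1)} (hne : sp ≠ sm)
    (hup : ψ (x * gen k sp) = ψ x + 1) (hdown : ψ x = ψ (x * gen k sm) + 1)
    (hflat : ∀ s, s ≠ sp → s ≠ sm → ψ (x * gen k s) = ψ x) :
    pLap k p r (fun y => g (ψ y)) x = 0 := by
  have hslope_up : (g (ψ (x * gen k sp)) - g (ψ x)) / r (x, x * gen k sp) = D := by
    rw [hr _ _ hup, hup, hg, mul_div_cancel_right₀ _ (hϱ _)]
  have hslope_down : (g (ψ (x * gen k sm)) - g (ψ x)) / r (x, x * gen k sm) = -D := by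
    rw [hr_symm, hr _ _ hdown, hdown, ← neg_sub, hg, neg_div, mul_div_cancel_right₀ _ (hϱ _)]
  rw [pLap, Fintype.sum_eq_add sp sm hne fun s hs => by
      rw [hflat s hs.1 hs.2, sub_self, zero_div, phiP_zero],
    hslope_up, hslope_down, phiP_neg, add_neg_cancel]

namespace G

theorem closure_range_gen (k : ℕ) : Submonoid.closure (Set.range (gen k)) = ⊤ := by
  refine (Submonoid.eq_top_iff' _).mpr fun x => ?_
  induction x using Monoid.CoprodI.induction_on with
  | one => exact one_mem _
  | of s m =>
    obtain rfl | rfl : m = 1 ∨ m = Multiplicative.ofAdd 1 := by revert m; decide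
    · simp only [map_one, one_mem]
    · exact Submonoid.subset_closure ⟨s, rfl⟩
  | mul x y hx hy => exact mul_mem hx hy

theorem mem_of_forall_gen_mem {k : ℕ} {S : Submonoid (G k)} (h : ∀ s, gen k s ∈ S) (x : G k) :
    x ∈ S :=
  Submonoid.closure_le.mpr (by rintro _ ⟨s, rfl⟩; exact h s)
    (closure_range_gen k ▸ Submonoid.mem_top x)

theorem hom_ext {k : ℕ} {M : Type*} [Monoid M] {φ ψ : G k →* M}
    (h : ∀ s, φ (gen k s) = ψ (gen k s)) : φ = ψ :=
  MonoidHom.eq_of_eqOn_denseM (closure_range_gen k) (by rintro _ ⟨s, rfl⟩; exact h s)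

end G

theorem cosetIdx_mul {k : ℕ} (ρ : G k →* Equiv.Perm ℤ) (x y : G k) :
    cosetIdx ρ (x * y) = ρ x (cosetIdx ρ y) := by
  simp [cosetIdx]

theorem isPeriodic_ker_of_comp_eq {k : ℕ} {ρ : G k →* Equiv.Perm ℤ} {f : G k →* G k}
    (h : ρ.comp f = ρ) (g : ℤ → ℝ) : IsPeriodic k f.ker (fun x => g (cosetIdx ρ x)) := by
  intro y hy x
  have hρy : ρ y = 1 := by rw [← h, MonoidHom.comp_apply, MonoidHom.mem_ker.mp hy, map_one]
  dsimp only
  rw [cosetIdx_mul, hρy, Equiv.Perm.one_apply]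

def intIsometries : Submonoid (Equiv.Perm ℤ) where
  carrier := {σ | Isometry σ}
  mul_mem' hσ hτ := hσ.comp hτ
  one_mem' := isometry_id

theorem isometry_of_forall_gen {k : ℕ} {ρ : G k →* Equiv.Perm ℤ}
    (h : ∀ s, Isometry (ρ (gen k s))) (x : G k) : Isometry (ρ x) :=
  G.mem_of_forall_gen_mem (S := intIsometries.comap ρ) h x

theorem Isometry.int_neighbors {σ : ℤ → ℤ} (hσ : Isometry σ) :
    σ 1 = σ 0 + 1 ∧ σ 0 = σ (-1) + 1 ∨ σ (-1) = σ 0 + 1 ∧ σ 0 = σ 1 + 1 := by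
  have hdist : ∀ m n : ℤ, |σ m - σ n| = |m - n| := fun m n => by
    have := hσ.dist_eq m n
    rw [Int.dist_eq, Int.dist_eq] at this
    exact_mod_cast this
  have h1 := hdist 1 0
  have h2 := hdist (-1) 0
  have h3 := hdist 1 (-1)
  norm_num at h1 h2 h3
  rw [abs_eq (by norm_num)] at h1 h2 h3
  omega

theorem exists_gen_cosetIdx_up_down {k : ℕ} {ρ : G k →* Equiv.Perm ℤ} {i j : Fin (k + 1)}
    (hij : i ≠ j) (hρi : ∀ n : ℤ, ρ (gen k i) n = 1 - n) (hρj : ∀ n : ℤ, ρ (gen k j) n = -1 - n)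
    (hρs : ∀ s : Fin (k + 1), s ≠ i → s ≠ j → ρ (gen k s) = 1) (x : G k) :
    ∃ sp sm : Fin (k + 1), sp ≠ sm ∧ cosetIdx ρ (x * gen k sp) = cosetIdx ρ x + 1 ∧
      cosetIdx ρ x = cosetIdx ρ (x * gen k sm) + 1 ∧
      ∀ s, s ≠ sp → s ≠ sm → cosetIdx ρ (x * gen k s) = cosetIdx ρ x := by
  have hi : cosetIdx ρ (x * gen k i) = ρ x 1 := by simp [cosetIdx, hρi]
  have hj : cosetIdx ρ (x * gen k j) = ρ x (-1) := by simp [cosetIdx, hρj]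
  have hflat : ∀ s, s ≠ i → s ≠ j → cosetIdx ρ (x * gen k s) = cosetIdx ρ x := by
    intro s hsi hsj
    rw [cosetIdx_mul, cosetIdx, hρs s hsi hsj]
    rfl
  have hx : Isometry (ρ x) := isometry_of_forall_gen (fun s => by
    by_cases hsi : s = i
    · rw [hsi, funext hρi]
      exact (IsometryEquiv.subLeft 1).isometry
    by_cases hsj : s = j
    · rw [hsj, funext hρj]
      exact (IsometryEquiv.subLeft (-1)).isometry
    · rw [hρs s hsi hsj]
      exact isometry_id) x
  rcases hx.int_neighbors with ⟨hup, hdown⟩ | ⟨hup, hdown⟩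
  · exact ⟨i, j, hij, hi ▸ hup, hj ▸ hdown, hflat⟩
  · exact ⟨j, i, hij.symm, hj ▸ hup, hi ▸ hdown, fun s hsj hsi => hflat s hsi hsj⟩

theorem stmt13_general (k : ℕ) (p : ℝ)
    (r : G k × G k → ℝ) (hr_symm : ∀ x y : G k, r (x, y) = r (y, x))
    (i j : Fin (k + 1)) (hij : i ≠ j)
    (ρ : G k →* Equiv.Perm ℤ)
    (hρi : ∀ n : ℤ, ρ (gen k i) n = 1 - n)
    (hρj : ∀ n : ℤ, ρ (gen k j) n = -1 - n)
    (hρs : ∀ s : Fin (k + 1), s ≠ i → s ≠ j → ρ (gen k s) = 1)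
    (f : G k →* G k)
    (hfi : f (gen k i) = gen k i) (hfj : f (gen k j) = gen k j)
    (hfs : ∀ s : Fin (k + 1), s ≠ i → s ≠ j → f (gen k s) = 1)
    (ϱ : ℤ → ℝ) (hϱ_pos : ∀ n : ℤ, 0 < ϱ n)
    (hrϱ : ∀ x y : G k, cosetIdx ρ y = cosetIdx ρ x + 1 → r (x, y) = ϱ (cosetIdx ρ x))
    (hϱ_sum : Summable ϱ)
    (q₁ q : ℕ) (t C : Fin q → ℝ) :
    IsPeriodic k f.ker
        (fun x => ∑ l : Fin q,
          if (l : ℕ) < q₁ then t l * C l * (∑' s : {m : ℤ // m < cosetIdx ρ x}, ϱ s) else t l * C l * (∑' s : {m : ℤ // cosetIdx ρ x ≤ m}, ϱ s)) ∧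
      ∀ x : G k, pLap k p r
        (fun x => ∑ l : Fin q,
          if (l : ℕ) < q₁ then t l * C l * (∑' s : {m : ℤ // m < cosetIdx ρ x}, ϱ s) else t l * C l * (∑' s : {m : ℤ // cosetIdx ρ x ≤ m}, ϱ s)) x = 0 := by
  have hρf : ρ.comp f = ρ := G.hom_ext fun s => by
    by_cases hsi : s = i
    · simp [hsi, hfi]
    by_cases hsj : s = j
    · simp [hsj, hfj]
    · simp [hfs s hsi hsj, hρs s hsi hsj]
  let g : ℤ → ℝ := fun n => ∑ l : Fin q, if (l : ℕ) < q₁ then t l * C l * ∑' s : {m : ℤ // m < n}, ϱ s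
    else t l * C l * ∑' s : {m : ℤ // n ≤ m}, ϱ s
  refine ⟨isPeriodic_ker_of_comp_eq hρf g, fun x => ?_⟩
  obtain ⟨sp, sm, hne, hup, hdown, hflat⟩ := exists_gen_cosetIdx_up_down hij hρi hρj hρs x
  exact pLap_comp_eq_zero (g := g) hr_symm (fun n => (hϱ_pos n).ne') hrϱ
    (sum_ite_tsum_add_one_sub hϱ_sum q₁ (fun l => t l * C l)) hne hup hdown hflat

theorem stmt13 (k : ℕ) (hk : 1 ≤ k) (p : ℝ) (hp1 : 1 < p)
    (r : G k × G k → ℝ) (hr_symm : ∀ x y : G k, r (x, y) = r (y, x)) (hr_pos : ∀ x y : G k, 0 < r (x, y))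
    (i j : Fin (k + 1)) (hij : i ≠ j)
    (ρ : G k →* Equiv.Perm ℤ)
    (hρi : ∀ n : ℤ, ρ (gen k i) n = 1 - n)
    (hρj : ∀ n : ℤ, ρ (gen k j) n = -1 - n)
    (hρs : ∀ s : Fin (k + 1), s ≠ i → s ≠ j → ρ (gen k s) = 1)
    (f : G k →* G k)
    (hfi : f (gen k i) = gen k i) (hfj : f (gen k j) = gen k j)
    (hfs : ∀ s : Fin (k + 1), s ≠ i → s ≠ j → f (gen k s) = 1)
    (ϱ : ℤ → ℝ) (hϱ_pos : ∀ n : ℤ, 0 < ϱ n)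
    (hrϱ : ∀ x y : G k, cosetIdx ρ y = cosetIdx ρ x + 1 → r (x, y) = ϱ (cosetIdx ρ x))
    (hϱ_sum : Summable ϱ)
    (q₁ q : ℕ) (hq : q₁ ≤ q) (t C : Fin q → ℝ) (hC : ∀ l : Fin q, 0 ≤ C l) :
    IsPeriodic k f.ker
        (fun x => ∑ l : Fin q,
          if (l : ℕ) < q₁ then t l * C l * (∑' s : {m : ℤ // m < cosetIdx ρ x}, ϱ s) else t l * C l * (∑' s : {m : ℤ // cosetIdx ρ x ≤ m}, ϱ s)) ∧
      ∀ x : G k, pLap k p r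
        (fun x => ∑ l : Fin q,
          if (l : ℕ) < q₁ then t l * C l * (∑' s : {m : ℤ // m < cosetIdx ρ x}, ϱ s) else t l * C l * (∑' s : {m : ℤ // cosetIdx ρ x ≤ m}, ϱ s)) x = 0 :=
  stmt13_general k p r hr_symm i j hij ρ hρi hρj hρs f hfi hfj hfs ϱ hϱ_pos hrϱ hϱ_sum q₁ q t C
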